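/- The group with presentation ⟨a, b | a^3 = 1, b^5 = 1, (aba^{-1}b^{-1}ab^2)^2 = 1, (ab)^2 = 1⟩ is trivial. -/

import Mathlib

/-- The relators (with (ab)² = 1 added) of ⟨a, b | a^3 = b^5 = (aba⁻¹b⁻¹ab²)² = 1, (ab)² = 1⟩. -/
def Trels : Set (FreeGroup (Fin 2)) :=
  {(FreeGroup.of 0) ^ 3, (FreeGroup.of 1) ^ 5,
   (FreeGroup.of 0 * FreeGroup.of 1 * (FreeGroup.of 0)⁻¹ * (FreeGroup.of 1)⁻¹ *
     FreeGroup.of 0 * (FreeGroup.of 1) ^ 2) ^ 2,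
   (FreeGroup.of 0 * FreeGroup.of 1) ^ 2}

/-- The corresponding presented group. -/
abbrev T : Type := PresentedGroup Trels

/-! Given a³ = (ab)² = 1, the relator aba⁻¹b⁻¹ab² is conjugate (by aba⁻¹) to b⁻², so the relation
(aba⁻¹b⁻¹ab²)² = 1 says b⁴ = 1. With b⁵ = 1 this forces b = 1, and then a² = a³ = 1 forces a = 1. -/

section
variable {G : Type*} [Group G] {x y : G}

theorem mul_mul_eq_inv_of_mul_sq_eq_one (h : (x * y) ^ 2 = 1) : x * y * x = y⁻¹ := by
  rw [eq_inv_iff_mul_eq_one, mul_assoc, ← sq, h]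

theorem isConj_inv_sq_relator (hx : x ^ 3 = 1) (hxy : (x * y) ^ 2 = 1) :
    IsConj (y ^ 2)⁻¹ (x * y * x⁻¹ * y⁻¹ * x * y ^ 2) := by
  have hxyx := mul_mul_eq_inv_of_mul_sq_eq_one hxy
  have hx' : x * x * x = 1 := by rwa [pow_succ, sq] at hx
  refine isConj_iff.mpr ⟨x * y * x⁻¹, ?_⟩
  rw [sq]
  symm
  calc x * y * x⁻¹ * y⁻¹ * x * (y * y)
      = x * y * x⁻¹ * y⁻¹ * (x * y * (x * x * x) * y) := by rw [hx']; group
    _ = x * y * x⁻¹ * y⁻¹ * ((x * y * x) * x * (x * y * x) * x⁻¹) := by group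
    _ = x * y * x⁻¹ * y⁻¹ * (y⁻¹ * x * y⁻¹ * x⁻¹) := by rw [hxyx]
    _ = x * y * x⁻¹ * (y * y)⁻¹ * (x * y * x⁻¹)⁻¹ := by group

theorem eq_one_of_relations (hx : x ^ 3 = 1) (hy : y ^ 5 = 1)
    (hw : (x * y * x⁻¹ * y⁻¹ * x * y ^ 2) ^ 2 = 1) (hxy : (x * y) ^ 2 = 1) : x = 1 ∧ y = 1 := by
  have hy4 : y ^ 4 = 1 := by
    have := (isConj_inv_sq_relator hx hxy).pow 2
    rwa [hw, isConj_one_left, inv_pow, inv_eq_one, ← pow_mul] at this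
  have hy1 : y = 1 := pow_one y ▸ pow_gcd_eq_one.mpr ⟨hy4, hy⟩
  subst hy1
  have hx2 : x ^ 2 = 1 := by simpa using hxy
  exact ⟨pow_one x ▸ pow_gcd_eq_one.mpr ⟨hx2, hx⟩, rfl⟩
end

/-- Adding the relation (ab)² = 1 to the generalized triangle group gives the trivial group. -/
theorem triangle_group_ab2_trivial : Subsingleton T := by
  have rel {r : FreeGroup (Fin 2)} (hr : r ∈ Trels) : PresentedGroup.mk Trels r = 1 :=
    PresentedGroup.one_of_mem hr
  obtain ⟨ha, hb⟩ := eq_one_of_relations (x := (PresentedGroup.of 0 : T)) (y := PresentedGroup.of 1)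
    (rel (by simp [Trels])) (rel (by simp [Trels])) (rel (by simp [Trels])) (rel (by simp [Trels]))
  have hid : MonoidHom.id T = 1 := PresentedGroup.ext fun i => by fin_cases i <;> assumption
  exact subsingleton_of_forall_eq 1 fun g => DFunLike.congr_fun hid g
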